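/- arXiv:1309.6798 — 2 statements merged into one kernel-verified Lean document; each statement's English description precedes it below -/
import Mathlib

section
/- Let f : [a,b] ⊆ [0,∞) → [0,∞) be continuous, 0 ≤ a < b, s-convex in the second sense for s ∈ (0,1], symmetric about the midpoint (f(x) = f(a+b-x) for all x ∈ [a,b]), and p,q > 0. Then ∫_a^b (x-a)^p (b-x)^q f(x)^2 dx ≤ ((b-a)^{p+q+1}/2) { (f(a)^2+f(b)^2)[B(p+1,2s+q+1)+B(q+1,2s+p+1)] + 4 f(a) f(b) B(p+s+1,q+s+1) }. -/
/-!
Substituting `x = a + (b - a) t` turns the weight into `(b - a)^(p+q) t^p (1 - t)^q`.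
s-convexity gives `f x ≤ (1 - t)^s f(a) + t^s f(b)`, and, applied at the reflected point
`a + b - x` where `f` takes the same value, `f x ≤ t^s f(a) + (1 - t)^s f(b)`. As `f ≥ 0`,
`f(x)^2` is at most the mean of the squares of these bounds; expanding this mean and integrating
against `t^p (1 - t)^q` term by term yields the three Beta integrals.
-/

open MeasureTheory Set

noncomputable def eulerBeta (m n : ℝ) : ℝ := ∫ t in (0:ℝ)..1, t ^ (m - 1) * (1 - t) ^ (n - 1)

theorem eulerBeta_comm (m n : ℝ) : eulerBeta m n = eulerBeta n m := by
  simpa [eulerBeta, mul_comm] using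
    intervalIntegral.integral_comp_sub_left (a := 0) (b := 1)
      (fun t : ℝ => t ^ (n - 1) * (1 - t) ^ (m - 1)) 1

theorem integral_rpow_mul_one_sub_rpow (m n : ℝ) :
    ∫ t in (0:ℝ)..1, t ^ m * (1 - t) ^ n = eulerBeta (m + 1) (n + 1) := by
  simp [eulerBeta]

theorem intervalIntegrable_rpow_mul_one_sub_rpow {m n : ℝ} (hm : 0 ≤ m) (hn : 0 ≤ n) :
    IntervalIntegrable (fun t : ℝ => t ^ m * (1 - t) ^ n) volume 0 1 :=
  ((Real.continuous_rpow_const hm).mul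
    ((Real.continuous_rpow_const hn).comp (continuous_const.sub continuous_id))).intervalIntegrable
      0 1

/-- Unlike `intervalIntegral.integral_mono_on`, no integrability of `f` is needed: if `f` is not
integrable its integral is `0`. -/
theorem intervalIntegral.integral_mono_on_of_nonneg {μ : Measure ℝ} {f g : ℝ → ℝ} {a b : ℝ}
    (hab : a ≤ b) (hg : IntervalIntegrable g μ a b) (hf : ∀ x ∈ Icc a b, 0 ≤ f x)
    (h : ∀ x ∈ Icc a b, f x ≤ g x) :
    ∫ x in a..b, f x ∂μ ≤ ∫ x in a..b, g x ∂μ := by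
  rw [intervalIntegral.integral_of_le hab, intervalIntegral.integral_of_le hab]
  refine integral_mono_of_nonneg ?_ hg.1 ?_ <;>
    refine (ae_restrict_iff' measurableSet_Ioc).2 (Filter.Eventually.of_forall fun x hx => ?_)
  exacts [hf x (Ioc_subset_Icc_self hx), h x (Ioc_subset_Icc_self hx)]

theorem integral_sub_rpow_mul_sub_rpow_mul_eq {a b : ℝ} (hab : a < b) (p q : ℝ) (g : ℝ → ℝ) :
    ∫ x in a..b, (x - a) ^ p * (b - x) ^ q * g x =
      (b - a) ^ (p + q + 1) * ∫ t in (0:ℝ)..1, t ^ p * (1 - t) ^ q * g (a + (b - a) * t) := by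
  have hc : 0 < b - a := sub_pos.2 hab
  have hweight : ∀ t ∈ uIcc (0:ℝ) 1,
      (a + (b - a) * t - a) ^ p * (b - (a + (b - a) * t)) ^ q * g (a + (b - a) * t) =
        (b - a) ^ (p + q) * (t ^ p * (1 - t) ^ q * g (a + (b - a) * t)) := by
    intro t ht
    rw [uIcc_of_le zero_le_one] at ht
    rw [show a + (b - a) * t - a = (b - a) * t by ring,
      show b - (a + (b - a) * t) = (b - a) * (1 - t) by ring,
      Real.mul_rpow hc.le ht.1, Real.mul_rpow hc.le (sub_nonneg.2 ht.2), Real.rpow_add hc]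
    ring
  calc ∫ x in a..b, (x - a) ^ p * (b - x) ^ q * g x
      = ∫ x in a + (b - a) * 0..a + (b - a) * 1, (x - a) ^ p * (b - x) ^ q * g x := by
        rw [mul_zero, add_zero, mul_one, add_sub_cancel]
    _ = (b - a) * ∫ t in (0:ℝ)..1, (a + (b - a) * t - a) ^ p * (b - (a + (b - a) * t)) ^ q *
          g (a + (b - a) * t) :=
        (intervalIntegral.smul_integral_comp_add_mul _ _ _).symm
    _ = (b - a) ^ (p + q + 1) * ∫ t in (0:ℝ)..1, t ^ p * (1 - t) ^ q * g (a + (b - a) * t) := by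
        rw [intervalIntegral.integral_congr hweight, intervalIntegral.integral_const_mul,
          Real.rpow_add hc (p + q) 1, Real.rpow_one]
        ring

def SConvexSecondSense (s : ℝ) (f : ℝ → ℝ) : Prop :=
  ∀ u v : ℝ, 0 ≤ u → 0 ≤ v → ∀ α β : ℝ, 0 ≤ α → 0 ≤ β → α + β = 1 →
    f (α * u + β * v) ≤ α ^ s * f u + β ^ s * f v

/-- Mean of the squares of the two s-convexity bounds for `f (a + (b - a) * t)` with `A = f a`,
`B = f b`; the second is s-convexity applied at the reflected point
`a + (b - a) * (1 - t)`. -/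
noncomputable def sConvexSqBound (s A B t : ℝ) : ℝ :=
  (((1 - t) ^ s * A + t ^ s * B) ^ 2 + (t ^ s * A + (1 - t) ^ s * B) ^ 2) / 2

theorem SConvexSecondSense.apply_segment_le {s : ℝ} {f : ℝ → ℝ} (hf : SConvexSecondSense s f)
    {a b t : ℝ} (ha : 0 ≤ a) (hb : 0 ≤ b) (ht : t ∈ Icc (0:ℝ) 1) :
    f (a + (b - a) * t) ≤ (1 - t) ^ s * f a + t ^ s * f b := by
  have h := hf a b ha hb (1 - t) t (sub_nonneg.2 ht.2) ht.1 (sub_add_cancel 1 t)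
  rwa [show (1 - t) * a + t * b = a + (b - a) * t by ring] at h

theorem SConvexSecondSense.sq_le_sConvexSqBound {s : ℝ} {f : ℝ → ℝ} (hf : SConvexSecondSense s f)
    {a b t : ℝ} (ha : 0 ≤ a) (hab : a ≤ b) (hnn : ∀ x ∈ Icc a b, 0 ≤ f x)
    (hsym : ∀ x ∈ Icc a b, f x = f (a + b - x)) (ht : t ∈ Icc (0:ℝ) 1) :
    f (a + (b - a) * t) ^ 2 ≤ sConvexSqBound s (f a) (f b) t := by
  have hmem : a + (b - a) * t ∈ Icc a b := by
    constructor <;> nlinarith [ht.1, ht.2]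
  have hdirect := hf.apply_segment_le ha (ha.trans hab) ht
  have hreflected : f (a + (b - a) * t) ≤ t ^ s * f a + (1 - t) ^ s * f b := by
    have h := hf.apply_segment_le ha (ha.trans hab) (t := 1 - t)
      ⟨sub_nonneg.2 ht.2, by linarith [ht.1]⟩
    rwa [sub_sub_cancel, show a + (b - a) * (1 - t) = a + b - (a + (b - a) * t) by ring,
      ← hsym _ hmem] at h
  have h₁ := pow_le_pow_left₀ (hnn _ hmem) hdirect 2
  have h₂ := pow_le_pow_left₀ (hnn _ hmem) hreflected 2
  unfold sConvexSqBound
  linarith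

theorem rpow_mul_one_sub_rpow_mul_sConvexSqBound {p q s t : ℝ} (hp : 0 ≤ p) (hq : 0 ≤ q)
    (hs : 0 ≤ s) (ht : t ∈ Icc (0:ℝ) 1) (A B : ℝ) :
    t ^ p * (1 - t) ^ q * sConvexSqBound s A B t =
      (A ^ 2 + B ^ 2) / 2 * (t ^ p * (1 - t) ^ (2 * s + q) + t ^ (2 * s + p) * (1 - t) ^ q) +
        2 * A * B * (t ^ (p + s) * (1 - t) ^ (q + s)) := by
  have ht' : 0 ≤ 1 - t := sub_nonneg.2 ht.2
  have h2s : 0 ≤ 2 * s := by positivity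
  rw [Real.rpow_add_of_nonneg ht.1 h2s hp, Real.rpow_add_of_nonneg ht' h2s hq,
    Real.rpow_add_of_nonneg ht.1 hp hs, Real.rpow_add_of_nonneg ht' hq hs,
    two_mul, Real.rpow_add_of_nonneg ht.1 hs hs, Real.rpow_add_of_nonneg ht' hs hs, sConvexSqBound]
  ring

theorem intervalIntegrable_rpow_mul_one_sub_rpow_mul_sConvexSqBound {p q s : ℝ} (hp : 0 ≤ p)
    (hq : 0 ≤ q) (hs : 0 ≤ s) (A B : ℝ) :
    IntervalIntegrable (fun t => t ^ p * (1 - t) ^ q * sConvexSqBound s A B t) volume 0 1 := by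
  have hpow : ∀ {r : ℝ}, 0 ≤ r → Continuous fun t : ℝ => t ^ r := Real.continuous_rpow_const
  have hpow' : ∀ {r : ℝ}, 0 ≤ r → Continuous fun t : ℝ => (1 - t) ^ r := fun hr =>
    (hpow hr).comp (continuous_const.sub continuous_id)
  unfold sConvexSqBound
  exact ((hpow hp).mul (hpow' hq)).mul
    (((((hpow' hs).mul continuous_const).add ((hpow hs).mul continuous_const)).pow 2).add
      ((((hpow hs).mul continuous_const).add ((hpow' hs).mul continuous_const)).pow 2)
      |>.div_const 2) |>.intervalIntegrable 0 1

theorem integral_rpow_mul_one_sub_rpow_mul_sConvexSqBound {p q s : ℝ} (hp : 0 ≤ p) (hq : 0 ≤ q)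
    (hs : 0 ≤ s) (A B : ℝ) :
    ∫ t in (0:ℝ)..1, t ^ p * (1 - t) ^ q * sConvexSqBound s A B t =
      (A ^ 2 + B ^ 2) / 2 *
          (eulerBeta (p + 1) (2 * s + q + 1) + eulerBeta (q + 1) (2 * s + p + 1)) +
        2 * A * B * eulerBeta (p + s + 1) (q + s + 1) := by
  have h2s : 0 ≤ 2 * s := by positivity
  have hI₁ := intervalIntegrable_rpow_mul_one_sub_rpow hp (add_nonneg h2s hq)
  have hI₂ := intervalIntegrable_rpow_mul_one_sub_rpow (add_nonneg h2s hp) hq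
  have hI₃ := intervalIntegrable_rpow_mul_one_sub_rpow (add_nonneg hp hs) (add_nonneg hq hs)
  rw [intervalIntegral.integral_congr fun t ht => rpow_mul_one_sub_rpow_mul_sConvexSqBound hp hq hs
      (by rwa [uIcc_of_le zero_le_one] at ht) A B,
    intervalIntegral.integral_add ((hI₁.add hI₂).const_mul _) (hI₃.const_mul _),
    intervalIntegral.integral_const_mul, intervalIntegral.integral_const_mul,
    intervalIntegral.integral_add hI₁ hI₂, integral_rpow_mul_one_sub_rpow,
    integral_rpow_mul_one_sub_rpow, integral_rpow_mul_one_sub_rpow, eulerBeta_comm (2 * s + p + 1)]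

theorem cor_2_2_general (f : ℝ → ℝ) (a b : ℝ) (ha : 0 ≤ a) (hab : a < b)
    (hnn : ∀ x ∈ Icc a b, 0 ≤ f x) (s : ℝ) (hs0 : 0 < s)
    (hsc : ∀ u v : ℝ, 0 ≤ u → 0 ≤ v → ∀ α β : ℝ, 0 ≤ α → 0 ≤ β → α + β = 1 →
      f (α * u + β * v) ≤ α ^ s * f u + β ^ s * f v)
    (hsym : ∀ x ∈ Icc a b, f x = f (a + b - x))
    (p q : ℝ) (hp : 0 < p) (hq : 0 < q) :
    ∫ x in a..b, (x - a) ^ p * (b - x) ^ q * f x ^ 2 ≤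
      (b - a) ^ (p + q + 1) / 2 *
        ((f a ^ 2 + f b ^ 2) * (eulerBeta (p + 1) (2 * s + q + 1) + eulerBeta (q + 1) (2 * s + p + 1)) +
          4 * f a * f b * eulerBeta (p + s + 1) (q + s + 1)) := by
  have hsc' : SConvexSecondSense s f := hsc
  rw [integral_sub_rpow_mul_sub_rpow_mul_eq hab]
  calc (b - a) ^ (p + q + 1) * ∫ t in (0:ℝ)..1, t ^ p * (1 - t) ^ q * f (a + (b - a) * t) ^ 2
      ≤ (b - a) ^ (p + q + 1) *
          ∫ t in (0:ℝ)..1, t ^ p * (1 - t) ^ q * sConvexSqBound s (f a) (f b) t := by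
        have hweight : ∀ t ∈ Icc (0:ℝ) 1, 0 ≤ t ^ p * (1 - t) ^ q := fun t ht =>
          mul_nonneg (Real.rpow_nonneg ht.1 p) (Real.rpow_nonneg (sub_nonneg.2 ht.2) q)
        gcongr
        exact intervalIntegral.integral_mono_on_of_nonneg zero_le_one
          (intervalIntegrable_rpow_mul_one_sub_rpow_mul_sConvexSqBound hp.le hq.le hs0.le _ _)
          (fun t ht => mul_nonneg (hweight t ht) (sq_nonneg _))
          fun t ht => mul_le_mul_of_nonneg_left
            (hsc'.sq_le_sConvexSqBound ha hab.le hnn hsym ht) (hweight t ht)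
    _ = _ := by
        rw [integral_rpow_mul_one_sub_rpow_mul_sConvexSqBound hp.le hq.le hs0.le]
        ring

theorem cor_2_2 (f : ℝ → ℝ) (a b : ℝ) (ha : 0 ≤ a) (hab : a < b)
    (hf : ContinuousOn f (Icc a b)) (hnn : ∀ x ∈ Icc a b, 0 ≤ f x) (s : ℝ) (hs0 : 0 < s) (hs1 : s ≤ 1)
    (hsc : ∀ u v : ℝ, 0 ≤ u → 0 ≤ v → ∀ α β : ℝ, 0 ≤ α → 0 ≤ β → α + β = 1 →
      f (α * u + β * v) ≤ α ^ s * f u + β ^ s * f v)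
    (hsym : ∀ x ∈ Icc a b, f x = f (a + b - x))
    (p q : ℝ) (hp : 0 < p) (hq : 0 < q) :
    ∫ x in a..b, (x - a) ^ p * (b - x) ^ q * f x ^ 2 ≤
      (b - a) ^ (p + q + 1) / 2 *
        ((f a ^ 2 + f b ^ 2) * (eulerBeta (p + 1) (2 * s + q + 1) + eulerBeta (q + 1) (2 * s + p + 1)) +
          4 * f a * f b * eulerBeta (p + s + 1) (q + s + 1)) :=
  cor_2_2_general f a b ha hab hnn s hs0 hsc hsym p q hp hq
end

section
/- Let f : [a,b] ⊆ [0,∞) → [0,∞) be continuous, quasi-convex, and monotone increasing, 0 ≤ a < b, p, q > 0. Then ∫_a^b (x-a)^p (b-x)^q f(x) f(a+b-x) dx ≤ (b-a)^{p+q+1} f(b)^2 B(p+1, q+1). -/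
/-! Since `f` is nonnegative and increasing, `f x * f (a + b - x) ≤ f b ^ 2` on `[a, b]`, so the
integral is at most `f b ^ 2 ∫ₐᵇ (x - a)^p (b - x)^q dx`; the substitution `x = a + (b - a) t`
turns this weight integral into `(b - a)^(p + q + 1) B(p + 1, q + 1)`. -/

open MeasureTheory Set

theorem integral_sub_rpow_mul_sub_rpow {a b : ℝ} (hab : a < b) (p q : ℝ) :
    ∫ x in a..b, (x - a) ^ p * (b - x) ^ q
      = (b - a) ^ (p + q + 1) * eulerBeta (p + 1) (q + 1) := by
  have hba : 0 < b - a := sub_pos.mpr hab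
  have hsubst : ∫ x in a..b, (x - a) ^ p * (b - x) ^ q
      = (b - a) * ∫ t in (0:ℝ)..1, (a + (b - a) * t - a) ^ p * (b - (a + (b - a) * t)) ^ q := by
    have h := intervalIntegral.smul_integral_comp_add_mul (a := 0) (b := 1)
      (fun x => (x - a) ^ p * (b - x) ^ q) (b - a) a
    rw [mul_zero, add_zero, mul_one, add_sub_cancel, smul_eq_mul] at h
    exact h.symm
  have hscale : ∀ t ∈ uIcc (0:ℝ) 1,
      (a + (b - a) * t - a) ^ p * (b - (a + (b - a) * t)) ^ q
        = (b - a) ^ (p + q) * (t ^ (p + 1 - 1) * (1 - t) ^ (q + 1 - 1)) := by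
    intro t ht
    rw [uIcc_of_le zero_le_one] at ht
    rw [show a + (b - a) * t - a = (b - a) * t by ring,
      show b - (a + (b - a) * t) = (b - a) * (1 - t) by ring,
      Real.mul_rpow hba.le ht.1, Real.mul_rpow hba.le (sub_nonneg.mpr ht.2),
      Real.rpow_add hba, add_sub_cancel_right, add_sub_cancel_right]
    ring
  rw [hsubst, intervalIntegral.integral_congr hscale, intervalIntegral.integral_const_mul,
    ← mul_assoc, Real.rpow_add_one hba.ne', mul_comm (b - a), eulerBeta]

theorem add_sub_mem_Icc {α : Type*} [AddCommGroup α] [PartialOrder α] [IsOrderedAddMonoid α]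
    {a b x : α} (hx : x ∈ Icc a b) : a + b - x ∈ Icc a b :=
  ⟨by simpa [add_sub_assoc] using hx.2, by simpa [add_comm a, add_sub_assoc] using hx.1⟩

theorem mul_apply_add_sub_le_sq_of_monotoneOn {f : ℝ → ℝ} {a b : ℝ}
    (hmono : MonotoneOn f (Icc a b)) (hnn : ∀ x ∈ Icc a b, 0 ≤ f x)
    {x : ℝ} (hx : x ∈ Icc a b) : f x * f (a + b - x) ≤ f b ^ 2 := by
  have hb : b ∈ Icc a b := right_mem_Icc.mpr (hx.1.trans hx.2)
  have hx' := add_sub_mem_Icc hx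
  rw [sq]
  exact mul_le_mul (hmono hx hb hx.2) (hmono hx' hb hx'.2) (hnn _ hx') (hnn _ hb)

theorem cor_2_5_inc_general (f : ℝ → ℝ) (a b : ℝ) (hab : a < b)
    (hf : ContinuousOn f (Icc a b)) (hnn : ∀ x ∈ Icc a b, 0 ≤ f x)
    (hmono : MonotoneOn f (Icc a b))
    (p q : ℝ) (hp : 0 < p) (hq' : 0 < q) :
    ∫ x in a..b, (x - a) ^ p * (b - x) ^ q * (f x * f (a + b - x)) ≤
      (b - a) ^ (p + q + 1) * f b ^ 2 * eulerBeta (p + 1) (q + 1) := by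
  have hw : Continuous fun x : ℝ => (x - a) ^ p * (b - x) ^ q := by fun_prop (disch := positivity)
  have hint : IntervalIntegrable
      (fun x => (x - a) ^ p * (b - x) ^ q * (f x * f (a + b - x))) volume a b := by
    refine ContinuousOn.intervalIntegrable ?_
    rw [uIcc_of_le hab.le]
    exact hw.continuousOn.mul (hf.mul (hf.comp (by fun_prop) fun _ => add_sub_mem_Icc))
  calc ∫ x in a..b, (x - a) ^ p * (b - x) ^ q * (f x * f (a + b - x))
      ≤ ∫ x in a..b, (x - a) ^ p * (b - x) ^ q * f b ^ 2 := by
        refine intervalIntegral.integral_mono_on hab.le hint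
          ((hw.mul continuous_const).intervalIntegrable a b) fun x hx => ?_
        have hwx : 0 ≤ (x - a) ^ p * (b - x) ^ q :=
          mul_nonneg (Real.rpow_nonneg (sub_nonneg.mpr hx.1) _)
            (Real.rpow_nonneg (sub_nonneg.mpr hx.2) _)
        exact mul_le_mul_of_nonneg_left (mul_apply_add_sub_le_sq_of_monotoneOn hmono hnn hx) hwx
    _ = (b - a) ^ (p + q + 1) * f b ^ 2 * eulerBeta (p + 1) (q + 1) := by
        rw [intervalIntegral.integral_mul_const, integral_sub_rpow_mul_sub_rpow hab]
        ring

theorem cor_2_5_inc (f : ℝ → ℝ) (a b : ℝ) (ha : 0 ≤ a) (hab : a < b)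
    (hf : ContinuousOn f (Icc a b)) (hnn : ∀ x ∈ Icc a b, 0 ≤ f x)
    (hq : ∀ x ∈ Icc a b, ∀ y ∈ Icc a b, ∀ α : ℝ, 0 ≤ α → α ≤ 1 →
      f (α * x + (1 - α) * y) ≤ max (f x) (f y))
    (hmono : MonotoneOn f (Icc a b))
    (p q : ℝ) (hp : 0 < p) (hq' : 0 < q) :
    ∫ x in a..b, (x - a) ^ p * (b - x) ^ q * (f x * f (a + b - x)) ≤
      (b - a) ^ (p + q + 1) * f b ^ 2 * eulerBeta (p + 1) (q + 1) :=
  cor_2_5_inc_general f a b hab hf hnn hmono p q hp hq'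
end
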